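/- For every 1/L-Lipschitz function f : ℝ → ℝ one has ‖f(M) − f(M')‖_HS ≤ (1/L) ‖M − M'‖_HS, where f(M)u = Σ_{i≥1} f(μ_i)⟨u,p_i⟩p_i and f(M')u = Σ_{i≥1} f(μ'_i)⟨u,q_i⟩q_i. -/
import Mathlib

open scoped RealInnerProductSpace

private lemma inner_tsum_smul {H : Type*} [NormedAddCommGroup H] [InnerProductSpace ℝ H]
    [CompleteSpace H] (b : HilbertBasis ℕ ℝ H) (c : ℕ → ℝ)
    (hc : Summable fun i => c i ^ 2) (j : ℕ) :
    ⟪∑' i, c i • b i, b j⟫ = c j := by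
  have hmem : Memℓp c 2 := by
    apply memℓp_gen
    have h : (fun i => ‖c i‖ ^ (2:ENNReal).toReal) = fun i => c i ^ 2 := by
      ext i
      rw [ENNReal.toReal_ofNat, Real.norm_eq_abs, Real.rpow_two, sq_abs]
    rw [h]; exact hc
  set l : lp (fun _ : ℕ => ℝ) 2 := ⟨c, hmem⟩ with hl
  have hs := b.hasSum_repr_symm l
  have hx : (∑' i, c i • b i) = b.repr.symm l := hs.tsum_eq
  rw [hx, real_inner_comm, ← b.repr_apply_apply]
  simp [l]

set_option maxHeartbeats 1000000

private lemma sq_sub_le {L s t u v : ℝ} (hL : 0 < L) (h : |u - v| ≤ (1 / L) * |s - t|) :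
    (u - v) ^ 2 ≤ (1 / L) ^ 2 * (s - t) ^ 2 := by
  have h0 : (0:ℝ) ≤ |u - v| := abs_nonneg _
  nlinarith [sq_abs (u - v), sq_abs (s - t), abs_nonneg (s - t)]

/-- For self-adjoint Hilbert–Schmidt operators `M`, `M'` with spectral decompositions
`Mu = Σ_i μ_i ⟨u,p_i⟩ p_i` and `M'u = Σ_i μ'_i ⟨u,q_i⟩ q_i`, and any `1/L`-Lipschitz
function `f : ℝ → ℝ`, one has `‖f(M) - f(M')‖_HS ≤ (1/L) ‖M - M'‖_HS`, where
`f(M)u = Σ_i f(μ_i)⟨u,p_i⟩p_i` and `f(M')u = Σ_i f(μ'_i)⟨u,q_i⟩q_i`.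
Here the Hilbert–Schmidt norm of an operator `T` is expressed through the orthonormal
basis `q` as `√(∑' n, ‖T (q n)‖²)`. -/
theorem hs_norm_lipschitz_functional_calculus
    {H : Type*} [NormedAddCommGroup H] [InnerProductSpace ℝ H] [CompleteSpace H]
    (p q : HilbertBasis ℕ ℝ H)
    (mu mu' : ℕ → ℝ)
    (hmu_sq : Summable fun i => mu i ^ 2)
    (hmu'_sq : Summable fun i => mu' i ^ 2)
    (M M' : H →L[ℝ] H)
    (hM : ∀ u, M u = ∑' i, (mu i * ⟪u, p i⟫) • p i)
    (hM' : ∀ u, M' u = ∑' i, (mu' i * ⟪u, q i⟫) • q i)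
    (L : ℝ) (hL : 0 < L)
    (f : ℝ → ℝ) (hf : ∀ s t : ℝ, |f s - f t| ≤ (1 / L) * |s - t|)
    (fM fM' : H →L[ℝ] H)
    (hfM : ∀ u, fM u = ∑' i, (f (mu i) * ⟪u, p i⟫) • p i)
    (hfM' : ∀ u, fM' u = ∑' i, (f (mu' i) * ⟪u, q i⟫) • q i) :
    Real.sqrt (∑' n : ℕ, ‖(fM - fM') (q n)‖ ^ 2) ≤
      (1 / L) * Real.sqrt (∑' n : ℕ, ‖(M - M') (q n)‖ ^ 2) := by
  set a : ℕ → ℕ → ℝ := fun n i => ⟪q n, p i⟫ with ha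
  -- basic facts
  have hqn : ∀ n, ‖q n‖ = 1 := fun n => q.orthonormal.1 n
  have hpn : ∀ j, ‖p j‖ = 1 := fun j => p.orthonormal.1 j
  have ha1 : ∀ n i, a n i ^ 2 ≤ 1 := by
    intro n i
    rw [sq_le_one_iff_abs_le_one]
    calc |a n i| ≤ ‖q n‖ * ‖p i‖ := abs_real_inner_le_norm _ _
      _ = 1 := by rw [hqn, hpn, mul_one]
  -- Parseval over p for q n
  have hParseval : ∀ n, HasSum (fun i => a n i ^ 2) 1 := by
    intro n
    have h := p.hasSum_inner_mul_inner (q n) (q n)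
    have e1 : ⟪q n, q n⟫ = 1 := by
      rw [real_inner_self_eq_norm_sq, hqn, one_pow]
    rw [e1] at h
    have e2 : (fun i => ⟪q n, p i⟫ * ⟪p i, q n⟫) = fun i => a n i ^ 2 := by
      funext i; rw [real_inner_comm (q n) (p i), pow_two]
    rwa [e2] at h
  -- Parseval over q for p j
  have hParseval' : ∀ j, HasSum (fun n => a n j ^ 2) 1 := by
    intro j
    have h := q.hasSum_inner_mul_inner (p j) (p j)
    have e1 : ⟪p j, p j⟫ = 1 := by
      rw [real_inner_self_eq_norm_sq, hpn, one_pow]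
    rw [e1] at h
    have e2 : (fun n => ⟪p j, q n⟫ * ⟪q n, p j⟫) = fun n => a n j ^ 2 := by
      funext n; rw [real_inner_comm (q n) (p j), pow_two]
    rwa [e2] at h
  -- action of M' and fM' on q n
  have diag : ∀ (g : ℕ → ℝ) n, (∑' i, (g i * ⟪q n, q i⟫) • q i) = g n • q n := by
    intro g n
    rw [tsum_eq_single n]
    · have : ⟪q n, q n⟫ = 1 := by rw [real_inner_self_eq_norm_sq, hqn, one_pow]
      rw [this, mul_one]
    · intro i hi
      rw [q.orthonormal.2 (Ne.symm hi), mul_zero, zero_smul]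
  -- Lipschitz-type bound on f at mu i
  have hfb : ∀ s : ℝ, |f s| ≤ |f 0| + (1 / L) * |s| := by
    intro s
    have h := hf s 0
    have := abs_sub_abs_le_abs_sub (f s) (f 0)
    simp only [sub_zero] at h
    linarith
  -- summability of coefficient squares
  have hsum_fc : ∀ n, Summable fun i => (f (mu i) * a n i) ^ 2 := by
    intro n
    apply Summable.of_nonneg_of_le (fun i => sq_nonneg _)
      (f := fun i => 2 * |f 0| ^ 2 * a n i ^ 2 + 2 * (1 / L) ^ 2 * mu i ^ 2)
    · intro i
      have h1 := hfb (mu i)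
      have h2 := ha1 n i
      have h3 : (f (mu i)) ^ 2 ≤ 2 * |f 0| ^ 2 + 2 * (1 / L) ^ 2 * mu i ^ 2 := by
        nlinarith [sq_abs (f (mu i)), sq_abs (mu i), abs_nonneg (f 0), abs_nonneg (mu i),
          sq_nonneg (|f 0| - (1/L) * |mu i|),
          mul_self_le_mul_self (abs_nonneg (f (mu i))) h1]
      have h4 : (0:ℝ) ≤ a n i ^ 2 := sq_nonneg _
      have hB : (0:ℝ) ≤ 2 * (1 / L) ^ 2 * mu i ^ 2 := by positivity
      have h5 : (0:ℝ) ≤ a n i ^ 2 := sq_nonneg _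
      nlinarith [mul_le_mul_of_nonneg_right h3 h5, mul_nonneg hB (sub_nonneg.2 h2),
        sq_nonneg (f (mu i) * a n i), sq_nonneg (f (mu i))]
    · exact (((hParseval n).summable.mul_left _).add (hmu_sq.mul_left _))
  have hsum_mc : ∀ n, Summable fun i => (mu i * a n i) ^ 2 := by
    intro n
    apply Summable.of_nonneg_of_le (fun i => sq_nonneg _) _ hmu_sq
    intro i
    have h2 := ha1 n i
    nlinarith [sq_nonneg (mu i)]
  -- matrix coefficients
  have cf : ∀ n j, ⟪fM (q n), p j⟫ = f (mu j) * a n j := by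
    intro n j
    rw [hfM (q n)]
    exact inner_tsum_smul p _ (hsum_fc n) j
  have cM : ∀ n j, ⟪M (q n), p j⟫ = mu j * a n j := by
    intro n j
    rw [hM (q n)]
    exact inner_tsum_smul p _ (hsum_mc n) j
  have cf' : ∀ n j, ⟪fM' (q n), p j⟫ = f (mu' n) * a n j := by
    intro n j
    rw [hfM' (q n), diag, real_inner_smul_left]
  have cM' : ∀ n j, ⟪M' (q n), p j⟫ = mu' n * a n j := by
    intro n j
    rw [hM' (q n), diag, real_inner_smul_left]
  -- coefficients of differences
  set G : ℕ → ℕ → ℝ := fun n j => (f (mu j) - f (mu' n)) * a n j with hG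
  set D : ℕ → ℕ → ℝ := fun n j => (mu j - mu' n) * a n j with hD
  have cG : ∀ n j, ⟪(fM - fM') (q n), p j⟫ = G n j := by
    intro n j
    rw [ContinuousLinearMap.sub_apply, inner_sub_left, cf, cf']
    ring
  have cD : ∀ n j, ⟪(M - M') (q n), p j⟫ = D n j := by
    intro n j
    rw [ContinuousLinearMap.sub_apply, inner_sub_left, cM, cM']
    ring
  -- Parseval for the differences
  have hnG : ∀ n, HasSum (fun j => G n j ^ 2) (‖(fM - fM') (q n)‖ ^ 2) := by
    intro n
    have h := p.hasSum_inner_mul_inner ((fM - fM') (q n)) ((fM - fM') (q n))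
    rw [real_inner_self_eq_norm_sq] at h
    have e2 : (fun j => ⟪(fM - fM') (q n), p j⟫ * ⟪p j, (fM - fM') (q n)⟫)
        = fun j => G n j ^ 2 := by
      funext j; rw [real_inner_comm ((fM - fM') (q n)) (p j), cG, pow_two]
    rwa [e2] at h
  have hnD : ∀ n, HasSum (fun j => D n j ^ 2) (‖(M - M') (q n)‖ ^ 2) := by
    intro n
    have h := p.hasSum_inner_mul_inner ((M - M') (q n)) ((M - M') (q n))
    rw [real_inner_self_eq_norm_sq] at h
    have e2 : (fun j => ⟪(M - M') (q n), p j⟫ * ⟪p j, (M - M') (q n)⟫)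
        = fun j => D n j ^ 2 := by
      funext j; rw [real_inner_comm ((M - M') (q n)) (p j), cD, pow_two]
    rwa [e2] at h
  -- pointwise Lipschitz bound on coefficients
  have hGD : ∀ n j, G n j ^ 2 ≤ (1 / L) ^ 2 * D n j ^ 2 := by
    intro n j
    have h := sq_sub_le hL (hf (mu j) (mu' n))
    have h4 : (0:ℝ) ≤ a n j ^ 2 := sq_nonneg _
    calc G n j ^ 2 = (f (mu j) - f (mu' n)) ^ 2 * a n j ^ 2 := by rw [hG]; ring
      _ ≤ ((1 / L) ^ 2 * (mu j - mu' n) ^ 2) * a n j ^ 2 := by nlinarith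
      _ = (1 / L) ^ 2 * D n j ^ 2 := by rw [hD]; ring
  -- per-n inequality
  have hper : ∀ n, ‖(fM - fM') (q n)‖ ^ 2 ≤ (1 / L) ^ 2 * ‖(M - M') (q n)‖ ^ 2 := by
    intro n
    rw [← (hnG n).tsum_eq, ← (hnD n).tsum_eq, ← tsum_mul_left]
    exact Summable.tsum_le_tsum (hGD n) (hnG n).summable ((hnD n).summable.mul_left _)
  -- summability of the double family mu j ^ 2 * a n j ^ 2
  have hF : Summable fun x : ℕ × ℕ => mu x.1 ^ 2 * a x.2 x.1 ^ 2 := by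
    rw [summable_prod_of_nonneg (fun x => mul_nonneg (sq_nonneg _) (sq_nonneg _))]
    constructor
    · intro j
      show Summable fun n : ℕ => mu j ^ 2 * a n j ^ 2
      exact (hParseval' j).summable.mul_left (mu j ^ 2)
    · apply Summable.of_nonneg_of_le
        (fun j => tsum_nonneg fun n => mul_nonneg (sq_nonneg _) (sq_nonneg _)) _ hmu_sq
      intro j
      show (∑' n : ℕ, mu j ^ 2 * a n j ^ 2) ≤ mu j ^ 2
      rw [tsum_mul_left, (hParseval' j).tsum_eq, mul_one]
  have hF' : Summable fun x : ℕ × ℕ => mu x.2 ^ 2 * a x.1 x.2 ^ 2 := hF.prod_symm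
  have hkey := (summable_prod_of_nonneg
    (f := fun x : ℕ × ℕ => mu x.2 ^ 2 * a x.1 x.2 ^ 2)
    (fun x => mul_nonneg (sq_nonneg _) (sq_nonneg _))).mp hF'
  have hSslice : ∀ n, Summable fun j => mu j ^ 2 * a n j ^ 2 := fun n => hkey.1 n
  have hS : Summable fun n => ∑' j, mu j ^ 2 * a n j ^ 2 := hkey.2
  -- summability of n ↦ ‖(M-M')(q n)‖²
  have hMsum : Summable fun n => ‖(M - M') (q n)‖ ^ 2 := by
    apply Summable.of_nonneg_of_le (fun n => sq_nonneg _)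
      (f := fun n => 2 * (∑' j, mu j ^ 2 * a n j ^ 2) + 2 * mu' n ^ 2)
    · intro n
      rw [← (hnD n).tsum_eq]
      have hb : Summable fun j => 2 * (mu j ^ 2 * a n j ^ 2) + 2 * mu' n ^ 2 * a n j ^ 2 :=
        ((hSslice n).mul_left 2).add ((hParseval n).summable.mul_left _)
      calc (∑' j, D n j ^ 2)
          ≤ ∑' j, (2 * (mu j ^ 2 * a n j ^ 2) + 2 * mu' n ^ 2 * a n j ^ 2) := by
            apply Summable.tsum_le_tsum _ (hnD n).summable hb
            intro j
            have : D n j ^ 2 = (mu j - mu' n) ^ 2 * a n j ^ 2 := by rw [hD]; ring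
            rw [this]
            nlinarith [sq_nonneg (a n j), sq_nonneg (mu j + mu' n), sq_nonneg (mu j - mu' n)]
        _ = 2 * (∑' j, mu j ^ 2 * a n j ^ 2) + 2 * mu' n ^ 2 := by
            rw [Summable.tsum_add ((hSslice n).mul_left 2) ((hParseval n).summable.mul_left _),
              tsum_mul_left, tsum_mul_left, (hParseval n).tsum_eq, mul_one]
    · exact (hS.mul_left 2).add (hmu'_sq.mul_left 2)
  -- summability of lhs
  have hfMsum : Summable fun n => ‖(fM - fM') (q n)‖ ^ 2 := by
    apply Summable.of_nonneg_of_le (fun n => sq_nonneg _) hper (hMsum.mul_left _)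
  -- conclude
  have hts : (∑' n, ‖(fM - fM') (q n)‖ ^ 2) ≤ (1 / L) ^ 2 * ∑' n, ‖(M - M') (q n)‖ ^ 2 := by
    rw [← tsum_mul_left]
    exact Summable.tsum_le_tsum hper hfMsum (hMsum.mul_left _)
  calc Real.sqrt (∑' n, ‖(fM - fM') (q n)‖ ^ 2)
      ≤ Real.sqrt ((1 / L) ^ 2 * ∑' n, ‖(M - M') (q n)‖ ^ 2) := Real.sqrt_le_sqrt hts
    _ = (1 / L) * Real.sqrt (∑' n, ‖(M - M') (q n)‖ ^ 2) := by
        rw [Real.sqrt_mul (sq_nonneg _), Real.sqrt_sq (by positivity)]
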